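/- Let n ≥ 2 and let G be a group with elements b_1,…,b_{n-1}, t_1,…,t_n, z satisfying: the t_i pairwise commute; z * t_i * z⁻¹ = t_{i+1} for 1 ≤ i ≤ n-1 and z * t_n * z⁻¹ = t_1; z = b_1 * ⋯ * b_{n-1} * t_n; and z^n = 1. Then (b_1 * ⋯ * b_{n-1})^n = (t_1 * t_2 * ⋯ * t_n)⁻¹. -/

import Mathlib

/-! Writing `b₁ ⋯ b_{n-1} = z t_n⁻¹` and pushing every `z` to the right gives
`(z t_n⁻¹)ⁿ = ∏_{k=1}^{n} (z^k t_n⁻¹ z^{-k}) · zⁿ`. Conjugation by `z^k` carries `t_n` to `t_k`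
and `zⁿ = 1`, so the power is `t₁⁻¹ ⋯ t_n⁻¹`, which is `(t₁ ⋯ t_n)⁻¹` because the `t_i` commute. -/

theorem mul_pow_eq_prod_conj {G : Type*} [Group G] (z a : G) (m : ℕ) :
    (z * a) ^ m = ((List.range m).map fun k => z ^ (k + 1) * a * (z ^ (k + 1))⁻¹).prod * z ^ m := by
  induction m with
  | zero => simp
  | succ m ih =>
    rw [pow_succ, ih, List.range_succ, List.map_append, List.prod_append]
    simp only [List.map_singleton, List.prod_singleton]
    group

theorem List.prod_map_inv_of_pairwise_commute {G : Type*} [Group G] {l : List G}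
    (hl : l.Pairwise Commute) : (l.map (·⁻¹)).prod = l.prod⁻¹ := by
  have hinv : (l.map (·⁻¹)).Pairwise Commute :=
    List.pairwise_map.mpr (hl.imp Commute.inv_inv)
  rw [List.prod_inv_reverse]
  exact (List.reverse_perm _).symm.prod_eq' hinv

theorem pow_conj_eq_of_cyclic {G : Type*} [Group G] {n : ℕ} {t : ℕ → G} {z : G}
    (hconj : ∀ i, 1 ≤ i → i ≤ n - 1 → z * t i * z⁻¹ = t (i + 1))
    (hconjn : z * t n * z⁻¹ = t 1) :
    ∀ k, 1 ≤ k → k ≤ n → z ^ k * t n * (z ^ k)⁻¹ = t k := by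
  intro k hk
  induction k, hk using Nat.le_induction with
  | base => intro; rwa [pow_one]
  | succ k hk ih =>
    intro hkn
    calc z ^ (k + 1) * t n * (z ^ (k + 1))⁻¹ = z * (z ^ k * t n * (z ^ k)⁻¹) * z⁻¹ := by group
      _ = t (k + 1) := by rw [ih (by omega), hconj k hk (by omega)]

theorem stmt_11_general (n : ℕ) (G : Type*) [Group G]
    (b t : ℕ → G) (z : G)
    (htcomm : ∀ i j, 1 ≤ i → i ≤ n → 1 ≤ j → j ≤ n → t i * t j = t j * t i)
    (hconj : ∀ i, 1 ≤ i → i ≤ n - 1 → z * t i * z⁻¹ = t (i + 1))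
    (hconjn : z * t n * z⁻¹ = t 1)
    (hz : z = (((List.range (n - 1)).map fun k => b (k + 1)).prod) * t n)
    (hzn : z ^ n = 1) :
    (((List.range (n - 1)).map fun k => b (k + 1)).prod) ^ n =
      (((List.range n).map fun k => t (k + 1)).prod)⁻¹ := by
  have hcomm : ((List.range n).map fun k => t (k + 1)).Pairwise Commute := by
    refine List.pairwise_of_forall_mem_list fun x hx y hy => ?_
    obtain ⟨i, hi, rfl⟩ := List.mem_map.mp hx
    obtain ⟨j, hj, rfl⟩ := List.mem_map.mp hy
    rw [List.mem_range] at hi hj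
    exact htcomm (i + 1) (j + 1) (by omega) hi (by omega) hj
  rw [eq_mul_inv_of_mul_eq hz.symm, mul_pow_eq_prod_conj, hzn, mul_one,
    ← List.prod_map_inv_of_pairwise_commute hcomm, List.map_map]
  refine congrArg List.prod (List.map_congr_left fun k hk => ?_)
  have hk : k < n := List.mem_range.mp hk
  calc z ^ (k + 1) * (t n)⁻¹ * (z ^ (k + 1))⁻¹ = (z ^ (k + 1) * t n * (z ^ (k + 1))⁻¹)⁻¹ := by
        group
    _ = (t (k + 1))⁻¹ := by rw [pow_conj_eq_of_cyclic hconj hconjn (k + 1) (by omega) hk]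

theorem stmt_11 (n : ℕ) (hn : 2 ≤ n) (G : Type*) [Group G]
    (b t : ℕ → G) (z : G)
    (htcomm : ∀ i j, 1 ≤ i → i ≤ n → 1 ≤ j → j ≤ n → t i * t j = t j * t i)
    (hconj : ∀ i, 1 ≤ i → i ≤ n - 1 → z * t i * z⁻¹ = t (i + 1))
    (hconjn : z * t n * z⁻¹ = t 1)
    (hz : z = (((List.range (n - 1)).map fun k => b (k + 1)).prod) * t n)
    (hzn : z ^ n = 1) :
    (((List.range (n - 1)).map fun k => b (k + 1)).prod) ^ n =
      (((List.range n).map fun k => t (k + 1)).prod)⁻¹ :=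
  stmt_11_general n G b t z htcomm hconj hconjn hz hzn
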